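/- Let R be a commutative Noetherian ring and N₁ ⊆ M₁, …, Nₙ ⊆ Mₙ proper submodules of finitely generated R-modules with P_{M_i}(N_i) = p₁^{r_{i1}}⋯p_k^{r_{ik}} (r_{ij} ≥ 0) for distinct primes p₁, …, p_k. Then P_{⊕ᵢ M_i}(⊕ᵢ N_i) = p₁^{s₁}⋯p_k^{s_k}, where s_j = max{r_{1j}, …, r_{nj}}. -/

import Mathlib

variable {R : Type*} [CommRing R] {M : Type*} [AddCommGroup M] [Module R M]

/-- The colon submodule `(N :_M I) = {x ∈ M | I • x ⊆ N}`. -/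
def colonSubmodule (N : Submodule R M) (I : Ideal R) : Submodule R M where
  carrier := {x | ∀ a ∈ I, a • x ∈ N}
  add_mem' := fun hx hy a ha => by simpa [smul_add] using N.add_mem (hx a ha) (hy a ha)
  zero_mem' := fun a _ => by simp
  smul_mem' := fun c x hx a ha => by
    rw [smul_comm]
    exact N.smul_mem c (hx a ha)

/-- `K` is a `p`-prime extension of `N`, i.e. `N` is a `p`-prime submodule of `K`. -/
def IsPrimeExt (p : Ideal R) (N K : Submodule R M) : Prop :=
  N < K ∧ N.colon K = p ∧ ∀ a : R, ∀ x ∈ K, a • x ∈ N → x ∈ N ∨ a ∈ p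

/-- The associated primes of `T / N` for submodules `N ≤ T ≤ M`. -/
def assOf (R : Type*) {M : Type*} [CommRing R] [AddCommGroup M] [Module R M]
    (N T : Submodule R M) : Set (Ideal R) :=
  associatedPrimes R ↥(T.map N.mkQ)

/-- `K` is a maximal `p`-prime extension of `N` inside `T`. -/
def IsMaximalPrimeExtIn (T : Submodule R M) (p : Ideal R) (N K : Submodule R M) : Prop :=
  K ≤ T ∧ IsPrimeExt p N K ∧ ∀ L ≤ T, IsPrimeExt p N L → ¬ K < L

/-- `K` is a regular `p`-prime extension of `N` inside `T`: a maximal `p`-prime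
extension where `p` is a maximal element of `Ass (T/N)`. -/
def IsRegularPrimeExtIn (T : Submodule R M) (p : Ideal R) (N K : Submodule R M) : Prop :=
  IsMaximalPrimeExtIn T p N K ∧ Maximal (· ∈ assOf R N T) p

/-- A regular prime extension (RPE) filtration inside `T` with primes `p i`. -/
def IsRPEFiltrationIn (T : Submodule R M) {n : ℕ}
    (F : Fin (n + 1) → Submodule R M) (p : Fin n → Ideal R) : Prop :=
  ∀ i : Fin n, IsRegularPrimeExtIn T (p i) (F i.castSucc) (F i.succ)

/-- The generalized prime ideal factorization of `N` in `T` is given by the multiset `s`: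
there is an RPE filtration of `T` over `N` whose multiset of primes is `s`. -/
def HasGPIF (N T : Submodule R M) (s : Multiset (Ideal R)) : Prop :=
  ∃ (n : ℕ) (F : Fin (n + 1) → Submodule R M) (p : Fin n → Ideal R),
    F 0 = N ∧ F (Fin.last n) = T ∧ IsRPEFiltrationIn T F p ∧ (List.ofFn p : Multiset (Ideal R)) = s

/-!
Over a Noetherian ring a regular prime extension of `N` inside `M` is forced: it is the colon
`(N :_M p)` by a maximal associated prime `p` of `M ⧸ N`. Two distinct maximal associated primes
commute (each stays maximal after the colon by the other), so the multiset of primes of such a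
filtration does not depend on the choices made. For a direct product,
`Ass(∏ Mᵢ ⧸ ∏ Nᵢ) = ⋃ Ass(Mᵢ ⧸ Nᵢ)` and colons are taken componentwise; the colon by a maximal
`q` of this union removes one copy of `q` from the factorization of each component in which `q`
occurs and changes nothing elsewhere. Hence each prime occurs in the product with the maximum of
its multiplicities in the factors.
-/

lemma mem_colonSubmodule {N : Submodule R M} {I : Ideal R} {x : M} :
    x ∈ colonSubmodule N I ↔ ∀ a ∈ I, a • x ∈ N := Iff.rfl

lemma le_colonSubmodule (N : Submodule R M) (I : Ideal R) : N ≤ colonSubmodule N I :=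
  fun _ hx a _ => N.smul_mem a hx

lemma colonSubmodule_comm (N : Submodule R M) (I J : Ideal R) :
    colonSubmodule (colonSubmodule N I) J = colonSubmodule (colonSubmodule N J) I := by
  ext x
  simp only [mem_colonSubmodule]
  exact ⟨fun h a ha b hb => smul_comm a b x ▸ h b hb a ha,
    fun h b hb a ha => smul_comm b a x ▸ h a ha b hb⟩

lemma mem_colonSubmodule_of_eq_colon {N : Submodule R M} {I : Ideal R} {x : M}
    (hI : I = N.colon {x}) : x ∈ colonSubmodule N I :=
  fun _ ha => Submodule.mem_colon_singleton.mp (hI ▸ ha)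

lemma IsPrimeExt.le_colonSubmodule {p : Ideal R} {N K : Submodule R M} (h : IsPrimeExt p N K) :
    K ≤ colonSubmodule N p :=
  fun x hx _ ha => Submodule.mem_colon.mp (h.2.1 ▸ ha) x hx

lemma colon_singleton_eq_top_iff {N : Submodule R M} {x : M} : N.colon {x} = ⊤ ↔ x ∈ N := by
  rw [Submodule.colon_eq_top_iff_subset, Set.singleton_subset_iff, SetLike.mem_coe]

lemma colon_bot_mkQ (N : Submodule R M) (x : M) :
    (⊥ : Submodule R (M ⧸ N)).colon {N.mkQ x} = N.colon {x} := by
  ext r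
  rw [Submodule.mem_colon_singleton, Submodule.mem_colon_singleton, Submodule.mem_bot,
    ← map_smul, Submodule.mkQ_apply, Submodule.Quotient.mk_eq_zero]

lemma assOf_top (N : Submodule R M) : assOf R N ⊤ = associatedPrimes R (M ⧸ N) := by
  rw [assOf, Submodule.map_top, Submodule.range_mkQ]
  exact LinearEquiv.AssociatedPrimes.eq (Submodule.topEquiv (R := R) (M := M ⧸ N))

def IsMaxAssociatedPrime (p : Ideal R) (N : Submodule R M) : Prop :=
  Maximal (· ∈ associatedPrimes R (M ⧸ N)) p

lemma IsMaxAssociatedPrime.ne_top {p : Ideal R} {N : Submodule R M}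
    (hp : IsMaxAssociatedPrime p N) : N ≠ ⊤ := by
  rintro rfl
  exact not_isAssociatedPrime_of_subsingleton hp.1

section Noetherian

variable [IsNoetherianRing R] {p q : Ideal R} {N : Submodule R M}

lemma isAssociatedPrime_quotient_iff :
    IsAssociatedPrime q (M ⧸ N) ↔ q.IsPrime ∧ ∃ x : M, q = N.colon {x} := by
  simp only [isAssociatedPrime_iff, N.mkQ_surjective.exists, colon_bot_mkQ]

lemma exists_colon_le_mem_associatedPrimes {x : M} (hx : x ∉ N) :
    ∃ q ∈ associatedPrimes R (M ⧸ N), N.colon {x} ≤ q := by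
  have hx' : N.mkQ x ≠ 0 := by
    rwa [Submodule.mkQ_apply, Ne, Submodule.Quotient.mk_eq_zero]
  obtain ⟨q, hq, hle⟩ := exists_le_isAssociatedPrime_of_isNoetherianRing R _ hx'
  exact ⟨q, hq, colon_bot_mkQ N x ▸ hle⟩

lemma exists_le_mem_associatedPrimes_of_colonSubmodule {I : Ideal R}
    (hq : q ∈ associatedPrimes R (M ⧸ colonSubmodule N I)) :
    ∃ q' ∈ associatedPrimes R (M ⧸ N), q ≤ q' := by
  obtain ⟨hprime, y, rfl⟩ := isAssociatedPrime_quotient_iff.mp hq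
  have hy : y ∉ colonSubmodule N I := fun hy => hprime.ne_top (colon_singleton_eq_top_iff.mpr hy)
  obtain ⟨a, ha, hay⟩ : ∃ a ∈ I, a • y ∉ N := by
    simpa [mem_colonSubmodule] using hy
  obtain ⟨q', hq', hle⟩ := exists_colon_le_mem_associatedPrimes hay
  refine ⟨q', hq', fun b hb => hle ?_⟩
  rw [Submodule.mem_colon_singleton, smul_comm]
  exact Submodule.mem_colon_singleton.mp hb a ha

lemma exists_isMaxAssociatedPrime (hN : N ≠ ⊤) : ∃ p, IsMaxAssociatedPrime p N := by
  have : Nontrivial (M ⧸ N) := Submodule.Quotient.nontrivial_iff.mpr hN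
  exact exists_maximal_of_wellFoundedGT _ (associatedPrimes.nonempty R (M ⧸ N))

lemma IsMaxAssociatedPrime.exists_eq_colon (hp : IsMaxAssociatedPrime p N) :
    ∃ x ∉ N, p = N.colon {x} := by
  obtain ⟨hprime, x, rfl⟩ := isAssociatedPrime_quotient_iff.mp hp.1
  exact ⟨x, fun hx => hprime.ne_top (colon_singleton_eq_top_iff.mpr hx), rfl⟩

lemma IsMaxAssociatedPrime.isPrimeExt (hp : IsMaxAssociatedPrime p N) :
    IsPrimeExt p N (colonSubmodule N p) := by
  obtain ⟨x, hxN, hpx⟩ := hp.exists_eq_colon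
  have hx : x ∈ colonSubmodule N p := mem_colonSubmodule_of_eq_colon hpx
  refine ⟨SetLike.lt_iff_le_and_exists.mpr ⟨le_colonSubmodule N p, x, hx, hxN⟩, ?_, ?_⟩
  · refine le_antisymm (fun a ha => hpx ▸ ?_) fun a ha =>
      Submodule.mem_colon.mpr fun y hy => hy a ha
    exact Submodule.mem_colon_singleton.mpr (Submodule.mem_colon.mp ha x hx)
  · intro a y hy hay
    refine or_iff_not_imp_left.mpr fun hyN => ?_
    obtain ⟨q, hq, hle⟩ := exists_colon_le_mem_associatedPrimes hyN
    have hpy : p ≤ N.colon {y} := fun b hb => Submodule.mem_colon_singleton.mpr (hy b hb)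
    rw [hp.eq_of_le hq (hpy.trans hle)]
    exact hle (Submodule.mem_colon_singleton.mpr hay)

lemma isRegularPrimeExtIn_top_iff {K : Submodule R M} :
    IsRegularPrimeExtIn ⊤ p N K ↔ IsMaxAssociatedPrime p N ∧ K = colonSubmodule N p := by
  rw [IsRegularPrimeExtIn, IsMaximalPrimeExtIn, assOf_top]
  constructor
  · rintro ⟨⟨-, hK, hKmax⟩, hp : IsMaxAssociatedPrime p N⟩
    exact ⟨hp, hK.le_colonSubmodule.eq_of_not_lt (hKmax _ le_top hp.isPrimeExt)⟩
  · rintro ⟨hp, rfl⟩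
    exact ⟨⟨le_top, hp.isPrimeExt, fun L _ hL => hL.le_colonSubmodule.not_gt⟩, hp⟩

lemma IsMaxAssociatedPrime.colonSubmodule (hp : IsMaxAssociatedPrime p N)
    (hq : IsMaxAssociatedPrime q N) (hpq : p ≠ q) :
    IsMaxAssociatedPrime q (colonSubmodule N p) := by
  obtain ⟨a, hap, haq⟩ := SetLike.not_le_iff_exists.mp fun hle => hpq (hp.eq_of_le hq.1 hle)
  obtain ⟨x, -, hqx⟩ := hq.exists_eq_colon
  have hprime : q.IsPrime := hq.1.isPrime
  refine ⟨isAssociatedPrime_quotient_iff.mpr ⟨hprime, x, le_antisymm ?_ ?_⟩, fun q' hq' hle => ?_⟩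
  · intro b hb
    exact Submodule.mem_colon_singleton.mpr
      (le_colonSubmodule N p (Submodule.mem_colon_singleton.mp (hqx ▸ hb)))
  · intro b hb
    have hab : (a * b) • x ∈ N := by
      rw [mul_smul]; exact Submodule.mem_colon_singleton.mp hb a hap
    exact (hprime.mem_or_mem (hqx ▸ Submodule.mem_colon_singleton.mpr hab)).resolve_left haq
  · obtain ⟨q'', hq'', hle''⟩ := exists_le_mem_associatedPrimes_of_colonSubmodule hq'
    exact hle''.trans (hq.2 hq'' (hle.trans hle''))

lemma colonSubmodule_eq_self_of_maximal {S : Set (Ideal R)}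
    (hS : associatedPrimes R (M ⧸ N) ⊆ S) (hq : Maximal (· ∈ S) q)
    (hqN : q ∉ associatedPrimes R (M ⧸ N)) : colonSubmodule N q = N := by
  refine le_antisymm (fun x hx => ?_) (le_colonSubmodule N q)
  by_contra hxN
  obtain ⟨q', hq', hle⟩ := exists_colon_le_mem_associatedPrimes hxN
  have hqq' : q ≤ q' := fun b hb => hle (Submodule.mem_colon_singleton.mpr (hx b hb))
  exact hqN (hq.eq_of_le (hS hq') hqq' ▸ hq')

end Noetherian

/-- The inductive form of `HasGPIF N ⊤ s`. -/
inductive RPEChain : Submodule R M → Multiset (Ideal R) → Prop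
  | top : RPEChain ⊤ 0
  | cons {N : Submodule R M} {p : Ideal R} {s : Multiset (Ideal R)} :
      IsMaxAssociatedPrime p N → RPEChain (colonSubmodule N p) s → RPEChain N (p ::ₘ s)

namespace RPEChain

variable {N : Submodule R M} {s : Multiset (Ideal R)}

lemma eq_zero_of_top (h : RPEChain (⊤ : Submodule R M) s) : s = 0 := by
  cases h with
  | top => rfl
  | cons hp _ => exact absurd rfl hp.ne_top

variable [IsNoetherianRing R]

lemma exists_le_of_mem (h : RPEChain N s) {q : Ideal R} (hq : q ∈ s) :
    ∃ q' ∈ associatedPrimes R (M ⧸ N), q ≤ q' := by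
  induction h with
  | top => simp at hq
  | cons hp _ ih =>
    rcases Multiset.mem_cons.mp hq with rfl | hq
    · exact ⟨q, hp.1, le_rfl⟩
    · obtain ⟨q', hq', hle⟩ := ih hq
      obtain ⟨q'', hq'', hle'⟩ := exists_le_mem_associatedPrimes_of_colonSubmodule hq'
      exact ⟨q'', hq'', hle.trans hle'⟩

lemma hasGPIF (h : RPEChain N s) : HasGPIF N ⊤ s := by
  induction h with
  | top => exact ⟨0, fun _ => ⊤, Fin.elim0, rfl, rfl, fun i => i.elim0, rfl⟩
  | @cons N p s hp _ ih =>
    obtain ⟨n, F, q, hF0, hlast, hF, rfl⟩ := ih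
    refine ⟨n + 1, Fin.cons N F, Fin.cons p q, rfl, hlast, Fin.cases ?_ fun i => ?_,
      by simp [List.ofFn_succ]⟩
    · exact isRegularPrimeExtIn_top_iff.mpr ⟨hp, hF0⟩
    · simpa using hF i

lemma _root_.HasGPIF.rpeChain (h : HasGPIF N ⊤ s) : RPEChain N s := by
  obtain ⟨n, F, p, rfl, hlast, hF, rfl⟩ := h
  induction n with
  | zero =>
    rw [show F 0 = ⊤ from hlast, List.ofFn_zero, Multiset.coe_nil]
    exact top
  | succ n ih =>
    obtain ⟨hp, hF1⟩ := isRegularPrimeExtIn_top_iff.mp (hF 0)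
    rw [List.ofFn_succ, ← Multiset.cons_coe]
    refine cons hp ?_
    exact hF1 ▸ ih (Fin.tail F) (Fin.tail p) hlast fun i => hF i.succ

variable [IsNoetherian R M]

lemma _root_.exists_rpeChain (N : Submodule R M) : ∃ s, RPEChain N s := by
  induction N using WellFoundedGT.induction with
  | _ N ih =>
    obtain rfl | hN := eq_or_ne N ⊤
    · exact ⟨0, top⟩
    obtain ⟨p, hp⟩ := exists_isMaxAssociatedPrime hN
    obtain ⟨s, hs⟩ := ih _ hp.isPrimeExt.1
    exact ⟨p ::ₘ s, cons hp hs⟩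

theorem unique {t : Multiset (Ideal R)} (hs : RPEChain N s) (ht : RPEChain N t) : s = t := by
  induction N using WellFoundedGT.induction generalizing s t with
  | _ N ih =>
    cases hs with
    | top => exact (eq_zero_of_top ht).symm
    | @cons _ p s hp hs =>
      cases ht with
      | top => exact absurd rfl hp.ne_top
      | @cons _ q t hq ht =>
        obtain rfl | hpq := eq_or_ne p q
        · rw [ih _ hp.isPrimeExt.1 hs ht]
        obtain ⟨u, hu⟩ := exists_rpeChain (colonSubmodule (colonSubmodule N p) q)
        have hsu : s = q ::ₘ u := ih _ hp.isPrimeExt.1 hs (cons (hp.colonSubmodule hq hpq) hu)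
        have htu : t = p ::ₘ u := ih _ hq.isPrimeExt.1 ht
          (cons (hq.colonSubmodule hp hpq.symm) (colonSubmodule_comm N p q ▸ hu))
        rw [hsu, htu, Multiset.cons_swap]

lemma exists_eq_cons (h : RPEChain N s) {p : Ideal R} (hp : IsMaxAssociatedPrime p N) :
    ∃ t, s = p ::ₘ t ∧ RPEChain (colonSubmodule N p) t := by
  obtain ⟨t, ht⟩ := exists_rpeChain (colonSubmodule N p)
  exact ⟨t, h.unique (cons hp ht), ht⟩

lemma colonSubmodule_erase (h : RPEChain N s) {S : Set (Ideal R)} {q : Ideal R}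
    (hS : associatedPrimes R (M ⧸ N) ⊆ S) (hq : Maximal (· ∈ S) q) :
    RPEChain (colonSubmodule N q) (s.erase q) := by
  by_cases hqN : q ∈ associatedPrimes R (M ⧸ N)
  · obtain ⟨t, rfl, ht⟩ := h.exists_eq_cons ⟨hqN, fun _ h' => hq.2 (hS h')⟩
    rwa [Multiset.erase_cons_head]
  · have hqs : q ∉ s := fun hqs => by
      obtain ⟨q', hq', hle⟩ := h.exists_le_of_mem hqs
      exact hqN (hq.eq_of_le (hS hq') hle ▸ hq')
    rwa [colonSubmodule_eq_self_of_maximal hS hq hqN, Multiset.erase_of_notMem hqs]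

end RPEChain

section Pi

variable {ι : Type*} {X : ι → Type*} [∀ i, AddCommGroup (X i)] [∀ i, Module R (X i)]

lemma colonSubmodule_pi (G : ∀ i, Submodule R (X i)) (I : Ideal R) :
    colonSubmodule (Submodule.pi Set.univ G) I
      = Submodule.pi Set.univ fun i => colonSubmodule (G i) I := by
  ext x
  simp only [mem_colonSubmodule, Submodule.mem_pi, Set.mem_univ, true_implies, Pi.smul_apply]
  exact ⟨fun h i a ha => h a ha i, fun h a ha i => h i a ha⟩

lemma colon_bot_pi [Fintype ι] (x : ∀ i, X i) :
    (⊥ : Submodule R (∀ i, X i)).colon {x}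
      = Finset.univ.inf fun i => (⊥ : Submodule R (X i)).colon {x i} := by
  ext r
  simp [Submodule.mem_colon_singleton, Submodule.mem_finsetInf, funext_iff]

lemma associatedPrimes_pi [Fintype ι] [IsNoetherianRing R] [DecidableEq ι] :
    associatedPrimes R (∀ i, X i) = ⋃ i, associatedPrimes R (X i) := by
  refine le_antisymm (fun q hq => ?_) (Set.iUnion_subset fun i =>
    associatedPrimes.subset_of_injective (f := LinearMap.single R X i)
      (Pi.single_injective i))
  obtain ⟨hprime, x, hqx⟩ := isAssociatedPrime_iff.mp hq
  rw [colon_bot_pi] at hqx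
  obtain ⟨i, -, hle⟩ := hprime.inf_le'.mp hqx.ge
  have hge := hqx.le.trans (Finset.inf_le (Finset.mem_univ i))
  exact Set.mem_iUnion.mpr ⟨i, isAssociatedPrime_iff.mpr ⟨hprime, x i, le_antisymm hge hle⟩⟩

lemma associatedPrimes_quotient_pi [Fintype ι] [IsNoetherianRing R] [DecidableEq ι]
    (G : ∀ i, Submodule R (X i)) :
    associatedPrimes R ((∀ i, X i) ⧸ Submodule.pi Set.univ G)
      = ⋃ i, associatedPrimes R (X i ⧸ G i) := by
  rw [LinearEquiv.AssociatedPrimes.eq (Submodule.quotientPi G), associatedPrimes_pi]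

lemma eq_top_of_pi_eq_top [DecidableEq ι] {G : ∀ i, Submodule R (X i)}
    (h : Submodule.pi Set.univ G = ⊤) (i : ι) : G i = ⊤ :=
  eq_top_iff.mpr fun x _ => by
    simpa using Submodule.mem_pi.mp (h ▸ Submodule.mem_top : Pi.single i x ∈ _) i (Set.mem_univ i)

end Pi

lemma Multiset.cons_finset_sup_erase {ι α : Type*} [DecidableEq α] {t : Finset ι}
    {s : ι → Multiset α} {a : α} {i : ι} (hi : i ∈ t) (ha : a ∈ s i) :
    a ::ₘ t.sup (fun j => (s j).erase a) = t.sup s := by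
  ext b
  simp only [Multiset.count_cons, Multiset.count_finset_sup]
  obtain rfl | hba := eq_or_ne b a
  · simp only [Multiset.count_erase_self, if_true]
    have hpos : 0 < (s i).count b := Multiset.count_pos.mpr ha
    have hle := Finset.le_sup (f := fun j => (s j).count b) hi
    have hsub : (t.sup fun j => (s j).count b - 1) ≤ (t.sup fun j => (s j).count b) - 1 :=
      Finset.sup_le fun j hj =>
        Nat.sub_le_sub_right (Finset.le_sup (f := fun j => (s j).count b) hj) 1
    refine le_antisymm (by omega) (Finset.sup_le fun j hj => ?_)
    exact Nat.le_add_of_sub_le (Finset.le_sup (f := fun j => (s j).count b - 1) hj)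
  · simp [Multiset.count_erase_of_ne hba, hba]

lemma Multiset.sum_replicate_finset_sup {ι κ α : Type*} [DecidableEq α] [Fintype κ] {f : κ → α}
    (hf : Function.Injective f) (t : Finset ι) (r : ι → κ → ℕ) :
    ∑ j, replicate (t.sup fun i => r i j) (f j) = t.sup fun i => ∑ j, replicate (r i j) (f j) := by
  ext a
  simp only [Multiset.count_sum', Multiset.count_replicate, Multiset.count_finset_sup]
  by_cases ha : a ∈ Set.range f
  · obtain ⟨j, rfl⟩ := ha
    classical
    simp [hf.eq_iff]
  · simp only [fun j => show f j ≠ a from fun e => ha ⟨j, e⟩, if_false, Finset.sum_const_zero]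
    exact (Finset.sup_bot t).symm

theorem RPEChain.pi [IsNoetherianRing R] {ι : Type*} [Fintype ι]
    [DecidableEq ι] {X : ι → Type*} [∀ i, AddCommGroup (X i)] [∀ i, Module R (X i)]
    [∀ i, IsNoetherian R (X i)] {G : ∀ i, Submodule R (X i)} {s : ι → Multiset (Ideal R)}
    (h : ∀ i, RPEChain (G i) (s i)) :
    RPEChain (Submodule.pi Set.univ G) (Finset.univ.sup s) := by
  suffices ∀ P, ∀ G : ∀ i, Submodule R (X i), Submodule.pi Set.univ G = P →
      ∀ s : ι → Multiset (Ideal R), (∀ i, RPEChain (G i) (s i)) →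
        RPEChain P (Finset.univ.sup s) from this _ G rfl s h
  intro P
  induction P using WellFoundedGT.induction with
  | _ P ih =>
  rintro G rfl s h
  obtain hP | hP := eq_or_ne (Submodule.pi Set.univ G) ⊤
  · have hs : ∀ i, s i = 0 := fun i => (eq_top_of_pi_eq_top hP i ▸ h i).eq_zero_of_top
    rw [hP, show Finset.univ.sup s = 0 by simp [hs]]
    exact RPEChain.top
  obtain ⟨q, hq⟩ := exists_isMaxAssociatedPrime hP
  have hqS : Maximal (· ∈ ⋃ i, associatedPrimes R (X i ⧸ G i)) q :=
    associatedPrimes_quotient_pi G ▸ hq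
  obtain ⟨i, hi⟩ := Set.mem_iUnion.mp hqS.1
  obtain ⟨t, hst, -⟩ := (h i).exists_eq_cons (p := q)
    ⟨hi, fun _ h' => hqS.2 (Set.mem_iUnion_of_mem i h')⟩
  have hcolon : ∀ j, RPEChain (colonSubmodule (G j) q) ((s j).erase q) := fun j =>
    (h j).colonSubmodule_erase (Set.subset_iUnion (fun i => associatedPrimes R (X i ⧸ G i)) j) hqS
  rw [← Multiset.cons_finset_sup_erase (Finset.mem_univ i) (hst ▸ Multiset.mem_cons_self q t)]
  exact RPEChain.cons hq <| ih _ hq.isPrimeExt.1 _ (colonSubmodule_pi G q).symm _ hcolon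

theorem gpif_pi_max_general {R : Type*} [CommRing R] [IsNoetherianRing R]
    {n : ℕ} (M : Fin n → Type*) [∀ i, AddCommGroup (M i)] [∀ i, Module R (M i)]
    [∀ i, Module.Finite R (M i)]
    {k : ℕ} (p : Fin k → Ideal R)
    (hdist : Function.Injective p) (r : Fin n → Fin k → ℕ)
    (N : ∀ i, Submodule R (M i))
    (h : ∀ i, HasGPIF (N i) ⊤ (∑ j, Multiset.replicate (r i j) (p j))) :
    HasGPIF (Submodule.pi Set.univ N) ⊤
      (∑ j, Multiset.replicate (Finset.univ.sup fun i => r i j) (p j)) := by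
  rw [Multiset.sum_replicate_finset_sup hdist]
  exact (RPEChain.pi fun i => (h i).rpeChain).hasGPIF

/-- If `P_{Mᵢ}(Nᵢ) = p₁^{r_{i1}}⋯p_k^{r_{ik}}` for each `i`, then the direct sum satisfies
`P_{⊕ᵢ Mᵢ}(⊕ᵢ Nᵢ) = p₁^{s₁}⋯p_k^{s_k}` where `s_j = maxᵢ r_{ij}`. -/
theorem gpif_pi_max {R : Type*} [CommRing R] [IsNoetherianRing R]
    {n : ℕ} (M : Fin n → Type*) [∀ i, AddCommGroup (M i)] [∀ i, Module R (M i)]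
    [∀ i, Module.Finite R (M i)]
    {k : ℕ} (p : Fin k → Ideal R) (hprime : ∀ j, (p j).IsPrime)
    (hdist : Function.Injective p) (r : Fin n → Fin k → ℕ)
    (N : ∀ i, Submodule R (M i)) (hN : ∀ i, N i ≠ ⊤)
    (h : ∀ i, HasGPIF (N i) ⊤ (∑ j, Multiset.replicate (r i j) (p j))) :
    HasGPIF (Submodule.pi Set.univ N) ⊤
      (∑ j, Multiset.replicate (Finset.univ.sup fun i => r i j) (p j)) :=
  gpif_pi_max_general M p hdist r N h
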